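/- arXiv:1605.09316 — 4 statements merged into one kernel-verified Lean document; each statement's English description precedes it below -/
import Mathlib

section
/- Let R be a ring with unity contained in a field E, and let a be an element of E. Then a is integral over R if and only if every place φ of E (a map E → F ∪ {∞} to a field F with ∞, satisfying φ(1)=1, φ(a+b)=φ(a)+φ(b) and φ(ab)=φ(a)φ(b) whenever the right-hand sides are defined) that takes finite values on all of R also takes a finite value on a. -/
/-!
The finite part `{a | φ a ≠ ∞}` of a place is a valuation subring of `E`, and conversely every
valuation subring `V` gives a place: reduction modulo the maximal ideal of `V`, with `E \ V`
sent to `∞`. The theorem therefore reduces to the description of the integral closure of `R`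
in `E` as the intersection of the valuation subrings containing `R` (Chevalley's extension
theorem, `iInf_valuationSubring_superset`).
-/

/-- A place of a field `E` with values in `F ∪ {∞}`, modelled as `E → Option F`
with `none` playing the role of `∞`.  The axioms state `φ(1)=1`,
`φ(a+b)=φ(a)+φ(b)` and `φ(ab)=φ(a)φ(b)` whenever the right-hand sides are
defined, with the conventions `c+∞=∞`, `c·∞=∞` for `c ≠ 0` and `∞·∞=∞`. -/
structure IsPlace {E F : Type*} [Field E] [Field F] (φ : E → Option F) : Prop where
  map_one : φ 1 = some 1
  add_fin : ∀ a b x y, φ a = some x → φ b = some y → φ (a + b) = some (x + y)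
  add_inf : ∀ a b x, φ a = some x → φ b = none → φ (a + b) = none
  mul_fin : ∀ a b x y, φ a = some x → φ b = some y → φ (a * b) = some (x * y)
  mul_inf : ∀ a b x, φ a = some x → x ≠ 0 → φ b = none → φ (a * b) = none
  inf_mul_inf : ∀ a b, φ a = none → φ b = none → φ (a * b) = none

theorem isIntegral_iff_forall_valuationSubring {K : Type*} [Field K] {R : Subring K} {x : K} :
    IsIntegral R x ↔ ∀ V : ValuationSubring K, R ≤ V.toSubring → x ∈ V := by
  have h := iInf_valuationSubring_superset (s := (R : Set K))
  rw [Subring.closure_eq] at h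
  rw [← mem_integralClosure_iff, ← Subalgebra.mem_toSubring, ← h]
  simp [Subring.mem_iInf]

namespace IsPlace

variable {E F : Type*} [Field E] [Field F] {φ : E → Option F}

lemma isSome_add (hφ : IsPlace φ) {a b : E} (ha : (φ a).isSome) (hb : (φ b).isSome) :
    (φ (a + b)).isSome := by
  obtain ⟨x, hx⟩ := Option.isSome_iff_exists.mp ha
  obtain ⟨y, hy⟩ := Option.isSome_iff_exists.mp hb
  simp [hφ.add_fin a b x y hx hy]

lemma isSome_mul (hφ : IsPlace φ) {a b : E} (ha : (φ a).isSome) (hb : (φ b).isSome) :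
    (φ (a * b)).isSome := by
  obtain ⟨x, hx⟩ := Option.isSome_iff_exists.mp ha
  obtain ⟨y, hy⟩ := Option.isSome_iff_exists.mp hb
  simp [hφ.mul_fin a b x y hx hy]

lemma isSome_of_isSome_add (hφ : IsPlace φ) {a b : E} (ha : (φ a).isSome)
    (hab : (φ (a + b)).isSome) : (φ b).isSome := by
  obtain ⟨x, hx⟩ := Option.isSome_iff_exists.mp ha
  by_contra hb
  simp [hφ.add_inf a b x hx (Option.not_isSome_iff_eq_none.mp hb)] at hab

lemma isSome_one (hφ : IsPlace φ) : (φ 1).isSome := by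
  simp [hφ.map_one]

lemma isSome_zero (hφ : IsPlace φ) : (φ 0).isSome :=
  hφ.isSome_of_isSome_add hφ.isSome_one (by simpa using hφ.isSome_one)

lemma isSome_neg (hφ : IsPlace φ) {a : E} (ha : (φ a).isSome) : (φ (-a)).isSome :=
  hφ.isSome_of_isSome_add ha (by simpa using hφ.isSome_zero)

lemma isSome_or_isSome_inv (hφ : IsPlace φ) (a : E) : (φ a).isSome ∨ (φ a⁻¹).isSome := by
  by_contra! h
  simp only [Bool.not_eq_true, Option.isSome_eq_false_iff, Option.isNone_iff_eq_none] at h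
  have ha : a ≠ 0 := by
    rintro rfl
    simpa [h.1] using hφ.isSome_zero
  simpa [mul_inv_cancel₀ ha, hφ.map_one] using hφ.inf_mul_inf a a⁻¹ h.1 h.2

def valuationSubring (hφ : IsPlace φ) : ValuationSubring E where
  carrier := {a | (φ a).isSome}
  mul_mem' := hφ.isSome_mul
  one_mem' := hφ.isSome_one
  add_mem' := hφ.isSome_add
  zero_mem' := hφ.isSome_zero
  neg_mem' := hφ.isSome_neg
  mem_or_inv_mem' := hφ.isSome_or_isSome_inv

end IsPlace

namespace ValuationSubring

variable {K : Type*} [Field K] (V : ValuationSubring K)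

open Classical in
noncomputable def place : K → Option (IsLocalRing.ResidueField V) :=
  fun x => if h : x ∈ V then some (IsLocalRing.residue V ⟨x, h⟩) else none

lemma place_of_mem {x : K} (h : x ∈ V) : V.place x = some (IsLocalRing.residue V ⟨x, h⟩) :=
  dif_pos h

lemma place_of_notMem {x : K} (h : x ∉ V) : V.place x = none :=
  dif_neg h

lemma place_isSome_iff {x : K} : (V.place x).isSome ↔ x ∈ V := by
  by_cases h : x ∈ V <;> simp [h, place_of_mem, place_of_notMem]

lemma place_eq_none_iff {x : K} : V.place x = none ↔ 1 < V.valuation x := by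
  rw [← Option.not_isSome_iff_eq_none, place_isSome_iff, ← valuation_le_one_iff, not_le]

lemma place_eq_some_iff {x : K} {y : IsLocalRing.ResidueField V} :
    V.place x = some y ↔ ∃ h : x ∈ V, IsLocalRing.residue V ⟨x, h⟩ = y := by
  by_cases h : x ∈ V <;> simp [h, place_of_mem, place_of_notMem]

lemma isPlace_place : IsPlace V.place where
  map_one := V.place_of_mem V.one_mem ▸ congrArg some (map_one _)
  add_fin a b x y ha hb := by
    obtain ⟨haV, rfl⟩ := V.place_eq_some_iff.mp ha
    obtain ⟨hbV, rfl⟩ := V.place_eq_some_iff.mp hb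
    exact V.place_eq_some_iff.mpr ⟨V.add_mem a b haV hbV, map_add _ (⟨a, haV⟩ : V) ⟨b, hbV⟩⟩
  add_inf a b x ha hb := by
    obtain ⟨haV, -⟩ := V.place_eq_some_iff.mp ha
    rw [place_eq_none_iff] at hb ⊢
    rwa [Valuation.map_add_eq_of_lt_right _ (((V.valuation_le_one_iff a).mpr haV).trans_lt hb)]
  mul_fin a b x y ha hb := by
    obtain ⟨haV, rfl⟩ := V.place_eq_some_iff.mp ha
    obtain ⟨hbV, rfl⟩ := V.place_eq_some_iff.mp hb
    exact V.place_eq_some_iff.mpr ⟨V.mul_mem a b haV hbV, map_mul _ (⟨a, haV⟩ : V) ⟨b, hbV⟩⟩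
  mul_inf a b x ha hx hb := by
    obtain ⟨haV, rfl⟩ := V.place_eq_some_iff.mp ha
    have hva : V.valuation a = 1 :=
      (V.valuation_eq_one_iff ⟨a, haV⟩).mp (IsLocalRing.residue_ne_zero_iff_isUnit _ |>.mp hx)
    rw [place_eq_none_iff] at hb ⊢
    rwa [map_mul, hva, one_mul]
  inf_mul_inf a b ha hb := by
    rw [place_eq_none_iff] at ha hb ⊢
    rw [map_mul]
    exact one_lt_mul'' ha hb

end ValuationSubring

/-- An element `a` of a field `E` is integral over a subring `R ⊆ E` if and only if
every place of `E` that is finite on `R` is finite on `a`. -/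
theorem isIntegral_iff_forall_place_finite {E : Type} [Field E] (R : Subring E) (a : E) :
    IsIntegral R a ↔
      ∀ (F : Type) [Field F] (φ : E → Option F), IsPlace φ →
        (∀ r : E, r ∈ R → (φ r).isSome) → (φ a).isSome := by
  rw [isIntegral_iff_forall_valuationSubring]
  refine ⟨fun h F _ φ hφ hR ↦ h hφ.valuationSubring hR, fun h V hRV ↦ ?_⟩
  rw [← V.place_isSome_iff]
  exact h _ V.place V.isPlace_place fun r hr ↦ V.place_isSome_iff.mpr (hRV hr)
end

section
/- Let x, y, z be the standard coordinates in ℝ³ and let K be a finite oriented 2-dimensional simplicial sphere with 2k vertices admitting a simplicial involution φ with no fixed vertices and such that no vertex v is joined by an edge of K to φ(v). Consider the space Θ ≅ ℝ^{3k−2} of polyhedra P: K → ℝ³ symmetric about the z-axis (i.e., P(φ(v)) is the image of P(v) under the rotation by π about the z-axis) with one chosen vertex mapped to the x-axis. The squared-edge-length map q: ℝ^{3k−2} → ℝ^{3k−3} (one coordinate per φ-orbit of edges, of which there are 3k−3) is polynomial, and at any point P where the differential dq has rank 3k−3, there exists ε > 0 and a non-constant smooth curve P_t, t ∈ (−ε,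 ε), with P₀ = P and q(P_t) = q(P) for all t. -/
open Set Module

private lemma contDiff_mvpoly {m : ℕ} (p : MvPolynomial (Fin m) ℝ) :
    ContDiff ℝ (⊤ : ℕ∞) (fun x : EuclideanSpace ℝ (Fin m) => MvPolynomial.eval (fun s => x s) p) := by
  induction p using MvPolynomial.induction_on with
  | C a => simpa using contDiff_const
  | add p q hp hq => simpa [MvPolynomial.eval_add] using hp.add hq
  | mul_X p i hp =>
      simpa [MvPolynomial.eval_mul] using hp.mul (EuclideanSpace.proj (𝕜 := ℝ) i).contDiff

set_option maxHeartbeats 1000000 in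
set_option synthInstance.maxHeartbeats 200000 in
/-- The squared-edge-length map `q : ℝ^{3k−2} → ℝ^{3k−3}` of the space of
line-symmetric polyhedra is polynomial, and at any point `P` where its
differential has full rank `3k−3` (i.e. is surjective) there is an `ε > 0`
and a non-constant smooth curve `P_t`, `t ∈ (−ε,ε)`, with `P₀ = P` and
`q(P_t) = q(P)` for all `t`; hence a generic such polyhedron is flexible. -/
theorem flexible_of_surjective_differential (k : ℕ) (hk : 2 ≤ k)
    (q : EuclideanSpace ℝ (Fin (3 * k - 2)) → EuclideanSpace ℝ (Fin (3 * k - 3)))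
    (hqpoly : ∃ Qp : Fin (3 * k - 3) → MvPolynomial (Fin (3 * k - 2)) ℝ,
      ∀ (x : EuclideanSpace ℝ (Fin (3 * k - 2))) (i : Fin (3 * k - 3)),
        q x i = MvPolynomial.eval (fun s => x s) (Qp i))
    (P : EuclideanSpace ℝ (Fin (3 * k - 2)))
    (hrank : Function.Surjective (fderiv ℝ q P)) :
    ∃ ε > (0 : ℝ), ∃ γ : ℝ → EuclideanSpace ℝ (Fin (3 * k - 2)),
      ContDiffOn ℝ (⊤ : ℕ∞) γ (Set.Ioo (-ε) ε) ∧ γ 0 = P ∧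
      (∀ t ∈ Set.Ioo (-ε) ε, q (γ t) = q P) ∧
      (∃ t ∈ Set.Ioo (-ε) ε, γ t ≠ P) := by
  classical
  obtain ⟨Qp, hQp⟩ := hqpoly
  have hq : ContDiff ℝ (⊤ : ℕ∞) q := by
    rw [contDiff_euclidean]
    intro i
    have h : (fun x : EuclideanSpace ℝ (Fin (3 * k - 2)) => q x i)
        = fun x => MvPolynomial.eval (fun s => x s) (Qp i) := funext fun x => hQp x i
    rw [h]; exact contDiff_mvpoly _
  set f' := fderiv ℝ q P with hf'
  have hdimE : finrank ℝ (EuclideanSpace ℝ (Fin (3 * k - 2))) = 3 * k - 2 :=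
    finrank_euclideanSpace_fin
  have hdimF : finrank ℝ (EuclideanSpace ℝ (Fin (3 * k - 3))) = 3 * k - 3 :=
    finrank_euclideanSpace_fin
  -- kernel of f' has dimension 1
  have hker : finrank ℝ (LinearMap.ker ((f' : _) : EuclideanSpace ℝ (Fin (3 * k - 2)) →ₗ[ℝ]
      EuclideanSpace ℝ (Fin (3 * k - 3)))) = 1 := by
    have h1 := LinearMap.finrank_range_add_finrank_ker
      ((f' : _) : EuclideanSpace ℝ (Fin (3 * k - 2)) →ₗ[ℝ] EuclideanSpace ℝ (Fin (3 * k - 3)))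
    have h2 : LinearMap.range ((f' : _) : EuclideanSpace ℝ (Fin (3 * k - 2)) →ₗ[ℝ]
        EuclideanSpace ℝ (Fin (3 * k - 3))) = ⊤ := LinearMap.range_eq_top.2 hrank
    rw [h2, finrank_top, hdimE, hdimF] at h1
    omega
  haveI : Nontrivial (LinearMap.ker ((f' : _) : EuclideanSpace ℝ (Fin (3 * k - 2)) →ₗ[ℝ]
      EuclideanSpace ℝ (Fin (3 * k - 3)))) := Module.finrank_pos_iff.1 (by rw [hker]; norm_num)
  obtain ⟨⟨v, hvker⟩, hvne⟩ := exists_ne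
    (0 : LinearMap.ker ((f' : _) : EuclideanSpace ℝ (Fin (3 * k - 2)) →ₗ[ℝ]
      EuclideanSpace ℝ (Fin (3 * k - 3))))
  have hv : v ≠ 0 := fun h => hvne (Subtype.ext h)
  have hspan : (ℝ ∙ v) = LinearMap.ker ((f' : _) : EuclideanSpace ℝ (Fin (3 * k - 2)) →ₗ[ℝ]
      EuclideanSpace ℝ (Fin (3 * k - 3))) := by
    apply Submodule.eq_of_le_of_finrank_eq
    · rw [Submodule.span_le, Set.singleton_subset_iff]; exact hvker
    · rw [finrank_span_singleton hv, hker]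
  -- linear functional with ℓ v = 1
  set ℓ : EuclideanSpace ℝ (Fin (3 * k - 2)) →L[ℝ] ℝ := (‖v‖ ^ 2)⁻¹ • innerSL ℝ v with hℓdef
  have hnv : ‖v‖ ≠ 0 := norm_ne_zero_iff.2 hv
  have hℓv : ℓ v = 1 := by
    simp only [hℓdef, ContinuousLinearMap.smul_apply, innerSL_apply_apply,
      real_inner_self_eq_norm_sq, smul_eq_mul]
    field_simp
  -- combined derivative
  set D := f'.prod ℓ with hD
  have hDinj : Function.Injective D := by
    intro x y hxy
    rw [← sub_eq_zero]
    have hDz : D (x - y) = 0 := by rw [map_sub, hxy, sub_self]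
    have h1 : f' (x - y) = 0 := congrArg Prod.fst hDz
    have h2 : ℓ (x - y) = 0 := congrArg Prod.snd hDz
    have hmem : x - y ∈ (ℝ ∙ v) := hspan ▸ LinearMap.mem_ker.2 h1
    obtain ⟨c, hc⟩ := Submodule.mem_span_singleton.1 hmem
    have hc0 : c = 0 := by
      have := h2
      rw [← hc] at this
      simpa [map_smul, hℓv] using this
    rw [← hc, hc0, zero_smul]
  have hdimFR : finrank ℝ (EuclideanSpace ℝ (Fin (3 * k - 3)) × ℝ) = 3 * k - 2 := by
    rw [Module.finrank_prod, hdimF, finrank_self]; omega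
  have hDbij : Function.Bijective ((D : _) : EuclideanSpace ℝ (Fin (3 * k - 2)) →ₗ[ℝ]
      EuclideanSpace ℝ (Fin (3 * k - 3)) × ℝ) :=
    ⟨hDinj, (LinearMap.injective_iff_surjective_of_finrank_eq_finrank
      (by rw [hdimE, hdimFR])).1 hDinj⟩
  set Deq := (LinearEquiv.ofBijective _ hDbij).toContinuousLinearEquiv with hDeq
  have hDeqcoe : (Deq : EuclideanSpace ℝ (Fin (3 * k - 2)) →L[ℝ]
      EuclideanSpace ℝ (Fin (3 * k - 3)) × ℝ) = D := by
    ext x : 1 <;> rfl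
  -- Φ and its strict derivative
  set Φ : EuclideanSpace ℝ (Fin (3 * k - 2)) → EuclideanSpace ℝ (Fin (3 * k - 3)) × ℝ :=
    fun x => (q x, ℓ x) with hΦdef
  have hΦ : ContDiff ℝ (⊤ : ℕ∞) Φ := hq.prodMk ℓ.contDiff
  have hqstrict : HasStrictFDerivAt q f' P := hq.contDiffAt.hasStrictFDerivAt (by simp)
  have hΦstrict : HasStrictFDerivAt Φ (Deq : _ →L[ℝ] _) P := by
    rw [hDeqcoe]
    exact hqstrict.prodMk ℓ.hasStrictFDerivAt
  set Ψ := hΦstrict.toOpenPartialHomeomorph Φ with hΨdef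
  have hΨcoe : ⇑Ψ = Φ := hΦstrict.toOpenPartialHomeomorph_coe
  have hPsource : P ∈ Ψ.source := hΦstrict.mem_toOpenPartialHomeomorph_source
  have hΦPtarget : Φ P ∈ Ψ.target := hΦstrict.image_mem_toOpenPartialHomeomorph_target
  have hsymmΦP : Ψ.symm (Φ P) = P := by
    have h := Ψ.left_inv hPsource
    rwa [hΨcoe] at h
  -- openness of invertibility of the derivative
  set e : (EuclideanSpace ℝ (Fin (3 * k - 3)) × ℝ) ≃L[ℝ] EuclideanSpace ℝ (Fin (3 * k - 2)) :=
    ContinuousLinearEquiv.ofFinrankEq (by rw [hdimE, hdimFR]) with he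
  set A : EuclideanSpace ℝ (Fin (3 * k - 2)) →
      (EuclideanSpace ℝ (Fin (3 * k - 2)) →L[ℝ] EuclideanSpace ℝ (Fin (3 * k - 2))) :=
    fun x => (e : _ →L[ℝ] _).comp (fderiv ℝ Φ x) with hA
  have hAcont : Continuous A := continuous_const.clm_comp (hΦ.continuous_fderiv (by simp))
  set S := {x | IsUnit (A x)} with hS
  have hSopen : IsOpen S := Units.isOpen.preimage hAcont
  have hfderivΦP : fderiv ℝ Φ P = (Deq : _ →L[ℝ] _) := hΦstrict.hasFDerivAt.fderiv
  have hPS : P ∈ S := by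
    refine ⟨⟨A P, ((Deq.trans e).symm : _ →L[ℝ] _), ?_, ?_⟩, rfl⟩
    · ext x
      simp [hA, hfderivΦP, ContinuousLinearMap.mul_apply]
    · ext x
      simp [hA, hfderivΦP, ContinuousLinearMap.mul_apply]
  -- smoothness of Ψ.symm at points of T
  have hsymm : ∀ a ∈ Ψ.target ∩ Ψ.symm ⁻¹' S, ContDiffAt ℝ (⊤ : ℕ∞) Ψ.symm a := by
    intro a ha
    obtain ⟨w, hw⟩ := ha.2
    have hAbij : Function.Bijective (A (Ψ.symm a)) := by
      rw [← hw]
      exact Function.bijective_iff_has_inverse.2 ⟨(↑w⁻¹ : _ →L[ℝ] _),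
        fun y => by
          have h := DFunLike.congr_fun w.inv_mul y
          rwa [ContinuousLinearMap.mul_apply, ContinuousLinearMap.one_apply] at h,
        fun y => by
          have h := DFunLike.congr_fun w.mul_inv y
          rwa [ContinuousLinearMap.mul_apply, ContinuousLinearMap.one_apply] at h⟩
    have hbij : Function.Bijective (fderiv ℝ Φ (Ψ.symm a)) := by
      have hcomp : ⇑(fderiv ℝ Φ (Ψ.symm a)) = ⇑e.symm ∘ ⇑(A (Ψ.symm a)) := by
        funext y; simp [hA]
      rw [hcomp]
      exact e.symm.bijective.comp hAbij
    set Ex := (LinearEquiv.ofBijective _ (by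
        exact_mod_cast hbij : Function.Bijective
          (((fderiv ℝ Φ (Ψ.symm a)) : _) : EuclideanSpace ℝ (Fin (3 * k - 2)) →ₗ[ℝ]
            EuclideanSpace ℝ (Fin (3 * k - 3)) × ℝ))).toContinuousLinearEquiv with hEx
    have hExcoe : (Ex : _ →L[ℝ] _) = fderiv ℝ Φ (Ψ.symm a) := by
      ext x : 1 <;> rfl
    have hfd : HasFDerivAt Φ (Ex : _ →L[ℝ] _) (Ψ.symm a) := by
      rw [hExcoe]
      exact (hΦ.differentiable (by simp) _).hasFDerivAt
    have := Ψ.contDiffAt_symm ha.1 (by rwa [hΨcoe]) (by rw [hΨcoe]; exact hΦ.contDiffAt)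
    exact this
  have hTopen : IsOpen (Ψ.target ∩ Ψ.symm ⁻¹' S) := Ψ.isOpen_inter_preimage_symm hSopen
  have hTmem : Φ P ∈ Ψ.target ∩ Ψ.symm ⁻¹' S := ⟨hΦPtarget, by rw [mem_preimage, hsymmΦP]; exact hPS⟩
  -- the curve
  set c : ℝ → EuclideanSpace ℝ (Fin (3 * k - 3)) × ℝ := fun t => (q P, ℓ P + t) with hc
  have hccont : ContDiff ℝ (⊤ : ℕ∞) c := contDiff_const.prodMk (contDiff_const.add contDiff_id)
  have hc0 : c 0 = Φ P := by simp [hc, hΦdef]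
  have hcT : IsOpen (c ⁻¹' (Ψ.target ∩ Ψ.symm ⁻¹' S)) := hTopen.preimage hccont.continuous
  have hc0T : (0 : ℝ) ∈ c ⁻¹' (Ψ.target ∩ Ψ.symm ⁻¹' S) := by rw [mem_preimage, hc0]; exact hTmem
  obtain ⟨ε, hε, hball⟩ := Metric.isOpen_iff.1 hcT 0 hc0T
  rw [Real.ball_eq_Ioo, zero_sub, zero_add] at hball
  refine ⟨ε, hε, fun t => Ψ.symm (c t), ?_, ?_, ?_, ?_⟩
  · intro t ht
    exact ((hsymm (c t) (hball ht)).comp t hccont.contDiffAt).contDiffWithinAt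
  · show Ψ.symm (c 0) = P
    rw [hc0, hsymmΦP]
  · intro t ht
    have hrt : Ψ (Ψ.symm (c t)) = c t := Ψ.right_inv (hball ht).1
    rw [hΨcoe] at hrt
    exact congrArg Prod.fst hrt
  · refine ⟨ε / 2, Set.mem_Ioo.2 ⟨by linarith, by linarith⟩, fun hcon => ?_⟩
    have hrt : Ψ (Ψ.symm (c (ε / 2))) = c (ε / 2) :=
      Ψ.right_inv (hball ⟨by linarith, by linarith⟩).1
    have hcon' : Ψ.symm (c (ε / 2)) = P := hcon
    rw [hΨcoe, hcon'] at hrt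
    have h2 : ℓ P = ℓ P + ε / 2 := congrArg Prod.snd hrt
    linarith
end

section
/- Let K be an oriented (n−1)-dimensional pseudo-manifold contained in the simplex Δ on its vertex set, let P: Δ → ℝⁿ be affine linear, and let ξ = Σ_k c_k Δ_k and ξ' = Σ_l c'_l Δ'_l be two n-dimensional simplicial chains in Δ with ∂ξ = ∂ξ' = [K]. Then Σ_k c_k·V_or(P(Δ_k)) = Σ_l c'_l·V_or(P(Δ'_l)), where V_or denotes the oriented volume of an n-simplex in ℝⁿ. Consequently the generalized oriented volume V_K(P) = Σ_k c_k·V_or(P(Δ_k)) is well defined, independent of the choice of ξ. -/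
open Finset Matrix

lemma det_cone' {n : ℕ} (y : Fin (n+1) → Fin n → ℝ) :
    (Matrix.of fun i j : Fin n => y i.succ j - y 0 j).det =
    ∑ i : Fin (n+1), (-1:ℝ)^(i:ℕ) * (Matrix.of fun k j : Fin n => y (i.succAbove k) j).det := by
  set M : Matrix (Fin (n+1)) (Fin (n+1)) ℝ := Matrix.of fun i => Fin.cons 1 (y i) with hM
  set N : Matrix (Fin (n+1)) (Fin (n+1)) ℝ :=
    Matrix.of fun i => if i = 0 then Fin.cons 1 (y 0) else Fin.cons 0 (y i - y 0) with hN
  have hMN : M.det = N.det := by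
    apply Matrix.det_eq_of_forall_row_eq_smul_add_const (fun i => if i = 0 then 0 else 1) 0
      (by simp)
    intro i j
    by_cases hi : i = 0
    · subst hi; simp [hM, hN]
    · simp only [hM, hN, Matrix.of_apply, if_neg hi, if_pos rfl, if_true]
      induction j using Fin.cases with
      | zero => simp
      | succ j => simp
  have hNdet : N.det = (Matrix.of fun i j : Fin n => y i.succ j - y 0 j).det := by
    rw [Matrix.det_succ_column_zero]
    rw [Finset.sum_eq_single 0]
    · simp only [hN, Matrix.of_apply, if_pos rfl]
      have : (N.submatrix (Fin.succAbove 0) Fin.succ) =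
          (Matrix.of fun i j : Fin n => y i.succ j - y 0 j) := by
        ext k j
        simp [hN, Fin.succAbove_zero, Fin.succ_ne_zero]
      rw [this]
      simp
    · intro i _ hi
      simp [hN, if_neg hi]
    · simp
  have hMdet : M.det = ∑ i : Fin (n+1), (-1:ℝ)^(i:ℕ) *
      (Matrix.of fun k j : Fin n => y (i.succAbove k) j).det := by
    rw [Matrix.det_succ_column_zero]
    refine Finset.sum_congr rfl fun i _ => ?_
    have : (M.submatrix i.succAbove Fin.succ) =
        (Matrix.of fun k j : Fin n => y (i.succAbove k) j) := by
      ext k j; simp [hM]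
    rw [this]
    simp [hM]

  rw [← hNdet, ← hMN, hMdet]

lemma filter_lt_card' {m n : ℕ} (s : Finset (Fin m)) (hs : s.card = n + 1) (i : Fin (n+1)) :
    (s.filter (· < s.orderEmbOfFin hs i)).card = (i : ℕ) := by
  have himg : s.filter (· < s.orderEmbOfFin hs i) =
      (Finset.Iio i).image (s.orderEmbOfFin hs) := by
    ext w
    simp only [Finset.mem_filter, Finset.mem_image, Finset.mem_Iio]
    constructor
    · rintro ⟨hws, hlt⟩
      have : w ∈ Set.range (s.orderEmbOfFin hs) := by
        rw [Finset.range_orderEmbOfFin]; exact hws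
      obtain ⟨j, rfl⟩ := this
      exact ⟨j, (s.orderEmbOfFin hs).lt_iff_lt.mp hlt, rfl⟩
    · rintro ⟨j, hj, rfl⟩
      exact ⟨Finset.orderEmbOfFin_mem _ _ _, (s.orderEmbOfFin hs).lt_iff_lt.mpr hj⟩
  rw [himg, Finset.card_image_of_injective _ (s.orderEmbOfFin hs).injective, Fin.card_Iio]

lemma erase_orderEmb' {m n : ℕ} (s : Finset (Fin m)) (hs : s.card = n + 1) (i : Fin (n+1))
    (h' : (s.erase (s.orderEmbOfFin hs i)).card = n) (k : Fin n) :
    (s.erase (s.orderEmbOfFin hs i)).orderEmbOfFin h' k = s.orderEmbOfFin hs (i.succAbove k) := by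
  have := Finset.orderEmbOfFin_unique h'
    (f := fun k => s.orderEmbOfFin hs (i.succAbove k)) ?_ ?_
  · exact (congrFun this k).symm
  · intro k
    refine Finset.mem_erase.mpr ⟨?_, Finset.orderEmbOfFin_mem _ _ _⟩
    intro h
    exact (Fin.succAbove_ne i k) ((s.orderEmbOfFin hs).injective h)
  · exact (s.orderEmbOfFin hs).strictMono.comp (Fin.strictMono_succAbove i)


/-- The simplicial boundary operator on (formal integral) chains of the full
simplex on the vertex set `Fin m`. -/
noncomputable def bdry {m : ℕ} (c : Finset (Fin m) →₀ ℤ) : Finset (Fin m) →₀ ℤ :=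
  c.sum fun s a =>
    a • s.sum fun v =>
      ((-1 : ℤ) ^ (s.filter (· < v)).card • Finsupp.single (s.erase v) (1 : ℤ))

/-- The oriented volume of the image under the affine map determined by vertex
positions `P` of the `n`-simplex encoded by an `(n+1)`-element vertex set `s`
(vertices ordered increasingly): `(1/n!)·det(y₁−y₀,…,y_n−y₀)`. -/
noncomputable def vor {m : ℕ} (n : ℕ) (P : Fin m → (Fin n → ℝ))
    (s : Finset (Fin m)) : ℝ :=
  if hs : s.card = n + 1 then
    ((n.factorial : ℝ))⁻¹ *
      (Matrix.of fun i j : Fin n =>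
        P (s.orderIsoOfFin hs i.succ) j - P (s.orderIsoOfFin hs 0) j).det
  else 0

noncomputable def coneVol {m : ℕ} (n : ℕ) (P : Fin m → (Fin n → ℝ))
    (t : Finset (Fin m)) : ℝ :=
  if h : t.card = n then
    ((n.factorial : ℝ))⁻¹ *
      (Matrix.of fun k j : Fin n => P (t.orderIsoOfFin h k) j).det
  else 0

lemma vor_cone {m n : ℕ} (P : Fin m → (Fin n → ℝ)) (s : Finset (Fin m))
    (hs : s.card = n + 1) :
    vor n P s = ∑ v ∈ s, (-1:ℝ) ^ ((s.filter (· < v)).card) * coneVol n P (s.erase v) := by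
  have hsum : ∑ v ∈ s, (-1:ℝ) ^ ((s.filter (· < v)).card) * coneVol n P (s.erase v) =
      ∑ i : Fin (n+1), (-1:ℝ) ^ ((s.filter (· < s.orderEmbOfFin hs i)).card) *
        coneVol n P (s.erase (s.orderEmbOfFin hs i)) := by
    refine (Finset.sum_bij (fun i _ => s.orderEmbOfFin hs i) ?_ ?_ ?_ ?_).symm
    · intro i _; exact Finset.orderEmbOfFin_mem _ _ _
    · intro a _ b _ h; exact (s.orderEmbOfFin hs).injective h
    · intro v hv
      have : v ∈ Set.range (s.orderEmbOfFin hs) := by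
        rw [Finset.range_orderEmbOfFin]; exact hv
      obtain ⟨j, rfl⟩ := this
      exact ⟨j, Finset.mem_univ j, rfl⟩
    · intro i _; rfl
  rw [hsum]
  have hterm : ∀ i : Fin (n+1),
      (-1:ℝ) ^ ((s.filter (· < s.orderEmbOfFin hs i)).card) *
        coneVol n P (s.erase (s.orderEmbOfFin hs i)) =
      (-1:ℝ) ^ (i:ℕ) * ((n.factorial : ℝ)⁻¹ *
        (Matrix.of fun k j : Fin n => P (s.orderEmbOfFin hs (i.succAbove k)) j).det) := by
    intro i
    have h' : (s.erase (s.orderEmbOfFin hs i)).card = n := by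
      rw [Finset.card_erase_of_mem (Finset.orderEmbOfFin_mem _ _ _), hs]
      omega
    rw [filter_lt_card' s hs i]
    congr 1
    rw [coneVol, dif_pos h']
    congr 2
    ext k j
    simp only [Matrix.of_apply, Finset.coe_orderIsoOfFin_apply]
    rw [erase_orderEmb' s hs i h' k]
  rw [Finset.sum_congr rfl fun i _ => hterm i]
  rw [vor, dif_pos hs]
  have := det_cone' (fun i => P (s.orderEmbOfFin hs i))
  simp only [Finset.coe_orderIsoOfFin_apply]
  rw [this, Finset.mul_sum]
  refine Finset.sum_congr rfl fun i _ => ?_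
  ring

/-- If `ξ` and `ξ'` are two `n`-dimensional chains in the simplex `Δ` on the
vertex set of `K` with `∂ξ = ∂ξ' = [K]`, then the corresponding sums of oriented
volumes agree; hence the generalized oriented volume
`V_K(P) = Σ_k c_k·V_or(P(Δ_k))` is well defined, independent of `ξ`. -/
theorem generalized_volume_well_defined (n m : ℕ) (hn : 1 ≤ n)
    (z ξ ξ' : Finset (Fin m) →₀ ℤ)
    (P : Fin m → (Fin n → ℝ))
    (hzcard : ∀ s ∈ z.support, s.card = n)
    (hξcard : ∀ s ∈ ξ.support, s.card = n + 1)
    (hξ'card : ∀ s ∈ ξ'.support, s.card = n + 1)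
    (hξ : bdry ξ = z) (hξ' : bdry ξ' = z) :
    ξ.sum (fun s a => (a : ℝ) * vor n P s) =
      ξ'.sum (fun s a => (a : ℝ) * vor n P s) := by
  set L : (Finset (Fin m) →₀ ℤ) →ₗ[ℤ] ℝ := Finsupp.lift ℝ ℤ _ (coneVol n P) with hL
  have hLsingle : ∀ (t : Finset (Fin m)), L (Finsupp.single t (1 : ℤ)) = coneVol n P t := by
    intro t
    simp [hL, Finsupp.lift_apply, Finsupp.sum_single_index]
  have key : ∀ c : Finset (Fin m) →₀ ℤ, (∀ s ∈ c.support, s.card = n + 1) →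
      c.sum (fun s a => (a : ℝ) * vor n P s) = L (bdry c) := by
    intro c hc
    rw [bdry, map_finsuppSum]
    refine Finsupp.sum_congr ?_
    intro s hs'
    have hs := hc s hs'
    rw [map_zsmul, map_sum, vor_cone P s hs, Finset.mul_sum]
    rw [zsmul_eq_mul, Finset.mul_sum]
    refine Finset.sum_congr rfl fun v _ => ?_
    rw [map_zsmul, hLsingle, zsmul_eq_mul]
    push_cast
    ring
  rw [key ξ hξcard, key ξ' hξ'card, hξ, hξ']
end

section
/- A nonconstant polynomial function f: ℂ → ℂ cannot have imaginary part of at most logarithmic growth; more precisely, if f ∈ ℂ[z] satisfies |Im f(z)| ≤ A + B·log(1 + |z|) for all z ∈ ℂ and some constants A, B ≥ 0, then f is constant. -/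
/-!
A nonconstant polynomial `p` takes every value `i t`, and by Cauchy's root bound applied to
`p - i t` it does so at a point `z` with `‖z‖ ≤ c₁ + c₂ t`. The growth hypothesis at `z` then
gives `t ≤ A + |B| log (1 + c₁ + c₂ t)`, which fails for large `t`.
-/

open Polynomial Filter Asymptotics

namespace Polynomial

theorem cauchyBound_sub_C_le {K : Type*} [NormedDivisionRing K] {p : K[X]}
    (hp : 0 < p.natDegree) (w : K) :
    cauchyBound (p - C w) ≤ cauchyBound p + ‖w‖₊ / ‖p.leadingCoeff‖₊ := by
  have hlead : (p - C w).leadingCoeff = p.leadingCoeff :=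
    leadingCoeff_sub_of_degree_lt (degree_C_le.trans_lt (natDegree_pos_iff_degree_pos.1 hp))
  have hcoeff : ∀ i ∈ Finset.range p.natDegree,
      ‖(p - C w).coeff i‖₊ ≤ (Finset.range p.natDegree).sup (‖p.coeff ·‖₊) + ‖w‖₊ := by
    intro i hi
    rw [coeff_sub]
    refine (nnnorm_sub_le _ _).trans (add_le_add (Finset.le_sup (f := (‖p.coeff ·‖₊)) hi) ?_)
    rw [coeff_C]
    split_ifs <;> simp
  rw [cauchyBound, cauchyBound, natDegree_sub_C, hlead, add_right_comm, ← add_div]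
  gcongr
  exact Finset.sup_le hcoeff

theorem exists_eval_eq_norm_lt_cauchyBound {K : Type*} [NormedField K] [IsAlgClosed K]
    {p : K[X]} (hp : 0 < p.natDegree) (w : K) :
    ∃ z, p.eval z = w ∧ ‖z‖ < cauchyBound p + ‖w‖ / ‖p.leadingCoeff‖ := by
  have hdeg : 0 < (p - C w).natDegree := by rwa [natDegree_sub_C]
  obtain ⟨z, hz⟩ := IsAlgClosed.exists_root (p - C w) (natDegree_pos_iff_degree_pos.1 hdeg).ne'
  refine ⟨z, by simpa [sub_eq_zero] using hz, ?_⟩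
  have := (hz.norm_lt_cauchyBound (ne_zero_of_natDegree_gt hdeg)).trans_le
    (cauchyBound_sub_C_le hp w)
  exact_mod_cast this

end Polynomial

theorem Real.isLittleO_log_affine_atTop (a : ℝ) {b : ℝ} (hb : 0 < b) :
    (fun t ↦ Real.log (a + b * t)) =o[atTop] id := by
  have hlin : Tendsto (fun t ↦ a + b * t) atTop atTop :=
    tendsto_atTop_add_const_left _ _ (tendsto_id.const_mul_atTop hb)
  refine (Real.isLittleO_log_id_atTop.comp_tendsto hlin).trans_isBigO ?_
  exact (isLittleO_const_id_atTop a).isBigO.add ((isBigO_refl _ _).const_mul_left b)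

theorem Real.eventually_add_mul_log_affine_lt (A B a : ℝ) {b : ℝ} (hb : 0 < b) :
    ∀ᶠ t in atTop, A + B * Real.log (a + b * t) < t := by
  have hlo : (fun t ↦ A + B * Real.log (a + b * t)) =o[atTop] id :=
    (isLittleO_const_id_atTop A).add ((Real.isLittleO_log_affine_atTop a hb).const_mul_left B)
  filter_upwards [hlo.eventuallyLT_norm_of_eventually_pos
    ((eventually_ne_atTop 0).mono fun _ ↦ norm_pos_iff.2),
    eventually_gt_atTop 0] with t hlt ht
  rw [id, Real.norm_of_nonneg ht.le] at hlt
  exact (le_abs_self _).trans_lt hlt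

theorem polynomial_constant_of_log_growth_im_general (p : Polynomial ℂ) (A B : ℝ)
    (h : ∀ z : ℂ, |(p.eval z).im| ≤ A + B * Real.log (1 + ‖z‖)) :
    ∀ z w : ℂ, p.eval z = p.eval w := by
  suffices hp : p.natDegree = 0 by
    intro z w
    rw [eq_C_of_natDegree_eq_zero hp, eval_C, eval_C]
  by_contra hp
  have hL : 0 < ‖p.leadingCoeff‖ :=
    norm_pos_iff.2 (leadingCoeff_ne_zero.2 (ne_zero_of_natDegree_gt (Nat.pos_of_ne_zero hp)))
  obtain ⟨t, ht, hlt⟩ := ((eventually_ge_atTop 0).and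
    (Real.eventually_add_mul_log_affine_lt A |B| (1 + cauchyBound p) (inv_pos.2 hL))).exists
  obtain ⟨z, hz, hzt⟩ :=
    exists_eval_eq_norm_lt_cauchyBound (Nat.pos_of_ne_zero hp) ((t : ℂ) * Complex.I)
  have hlog : Real.log (1 + ‖z‖) ≤ Real.log (1 + cauchyBound p + ‖p.leadingCoeff‖⁻¹ * t) := by
    refine Real.log_le_log (by positivity) ?_
    simp only [norm_mul, Complex.norm_I, mul_one, Complex.norm_real, Real.norm_of_nonneg ht] at hzt
    linarith [div_eq_inv_mul t ‖p.leadingCoeff‖]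
  refine lt_irrefl t ?_
  calc t = |(p.eval z).im| := by simp [hz, abs_of_nonneg ht]
    _ ≤ A + B * Real.log (1 + ‖z‖) := h z
    _ ≤ A + |B| * Real.log (1 + ‖z‖) := by
        gcongr
        · exact Real.log_nonneg (by simp)
        · exact le_abs_self B
    _ ≤ A + |B| * Real.log (1 + cauchyBound p + ‖p.leadingCoeff‖⁻¹ * t) := by gcongr
    _ < t := hlt

/-- A polynomial function `f : ℂ → ℂ` whose imaginary part has at most
logarithmic growth is constant. -/
theorem polynomial_constant_of_log_growth_im (p : Polynomial ℂ) (A B : ℝ)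
    (hA : 0 ≤ A) (hB : 0 ≤ B)
    (h : ∀ z : ℂ, |(p.eval z).im| ≤ A + B * Real.log (1 + ‖z‖)) :
    ∀ z w : ℂ, p.eval z = p.eval w :=
  polynomial_constant_of_log_growth_im_general p A B h
end
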